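/- Let G = (V, E) be a finite simple graph with at least one edge, regarded as the Sperner hypergraph B = E of two-element sets. Then G is a unique key graph if and only if for every maximal independent set I ⊆ V of G and every vertex v ∈ I there exists a vertex u ∉ I that is an individual neighbor of v, i.e. N(u) ∩ I = {v}. -/

import Mathlib

/-!
Every edge is a key of `Φ_E`, so `Φ_E` is the largest pure Horn function whose minimal keys are the
edges. The smallest one, `indepClosureHorn G`, is true exactly on the sets closed under
`S ↦ ⋂ {maximal independent J ⊇ S}`: any pure Horn `h` with `𝒦(h) = E` is true on every maximal
independent set (otherwise that set would be a key containing no edge) and is closed under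
intersections. Hence `G` is a unique key graph iff every independent set is an intersection of
maximal independent sets. An individual neighbour `u` of `w ∈ I` lets one trade `w` for `u` and so
exclude `w` from some maximal independent set containing `I \ {w}`; conversely, if `v ∈ I` has no
individual neighbour, every maximal independent set containing `I \ {v}` also contains `v`.
-/

open scoped Classical

variable {V : Type*} [Fintype V] [DecidableEq V]

/-- A Sperner hypergraph: no hyperedge contains another one. -/
def SpernerFam (𝓑 : Set (Finset V)) : Prop :=
  ∀ B₁ ∈ 𝓑, ∀ B₂ ∈ 𝓑, B₁ ⊆ B₂ → B₁ = B₂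

/-- `T` is a transversal of `𝓑` if it meets every hyperedge. -/
def IsTransversal (𝓑 : Set (Finset V)) (T : Finset V) : Prop :=
  ∀ B ∈ 𝓑, (T ∩ B).Nonempty

/-- `𝓑^d`: the family of inclusion-minimal transversals of `𝓑`. -/
def dualHyp (𝓑 : Set (Finset V)) : Set (Finset V) :=
  {T | IsTransversal 𝓑 T ∧ ∀ T', IsTransversal 𝓑 T' → T' ⊆ T → T' = T}

/-- A Boolean function `h` on `V` is pure Horn if its set of true assignments contains the
all-true assignment and is closed under componentwise AND. -/
def PureHorn (h : (V → Bool) → Bool) : Prop :=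
  h (fun _ => true) = true ∧
  ∀ x y : V → Bool, h x = true → h y = true → h (fun v => x v && y v) = true

/-- The clause `A → v` is an implicate of `h`: every true assignment of `h` that is true on
every element of `A` is also true at `v`. -/
def Implicate (h : (V → Bool) → Bool) (A : Finset V) (v : V) : Prop :=
  ∀ x : V → Bool, h x = true → (∀ a ∈ A, x a = true) → x v = true

/-- `K` is a key of `h` if `K → v` is an implicate of `h` for every `v ∈ V \ K`. -/
def IsKey (h : (V → Bool) → Bool) (K : Finset V) : Prop :=
  ∀ v ∉ K, Implicate h K v

/-- `𝒦(h)`: the family of inclusion-minimal keys of `h`. -/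
def minKeys (h : (V → Bool) → Bool) : Set (Finset V) :=
  {K | IsKey h K ∧ ∀ K', IsKey h K' → K' ⊆ K → K' = K}

/-- `Φ_𝓑`: the pure Horn function whose true assignments are exactly those `x` such that for
every `B ∈ 𝓑` on which `x` is identically true, `x` is identically true on all of `V`. -/
noncomputable def PhiB (𝓑 : Set (Finset V)) : (V → Bool) → Bool :=
  fun x => decide (∀ B ∈ 𝓑, (∀ u ∈ B, x u = true) → ∀ v : V, x v = true)

/-- `𝓑` is a unique key hypergraph: `Φ_𝓑` is the unique pure Horn function `h`
with `𝒦(h) = 𝓑`. -/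
def UniqueKeyHypergraph (𝓑 : Set (Finset V)) : Prop :=
  minKeys (PhiB 𝓑) = 𝓑 ∧
  ∀ h : (V → Bool) → Bool, PureHorn h → minKeys h = 𝓑 → h = PhiB 𝓑

/-- The edge set of a simple graph viewed as a hypergraph of two-element sets. -/
def edgeFam (G : SimpleGraph V) : Set (Finset V) :=
  {e | ∃ u v : V, G.Adj u v ∧ e = {u, v}}

/-- `I` is a maximal independent set of the graph `G`. -/
def MaximalIndepSet (G : SimpleGraph V) (I : Finset V) : Prop :=
  (∀ u ∈ I, ∀ v ∈ I, ¬ G.Adj u v) ∧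
  ∀ I' : Finset V, (∀ u ∈ I', ∀ v ∈ I', ¬ G.Adj u v) → I ⊆ I' → I' = I

open Finset

section BooleanFunctions

variable {V : Type*}

def boolIndicator [DecidableEq V] (S : Finset V) : V → Bool := fun v => decide (v ∈ S)

def trueSet [Fintype V] (x : V → Bool) : Finset V := univ.filter (x · = true)

@[simp]
lemma boolIndicator_eq_true [DecidableEq V] {S : Finset V} {v : V} :
    boolIndicator S v = true ↔ v ∈ S := by
  simp [boolIndicator]

@[simp]
lemma mem_trueSet [Fintype V] {x : V → Bool} {v : V} : v ∈ trueSet x ↔ x v = true := by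
  simp [trueSet]

@[simp]
lemma trueSet_boolIndicator [Fintype V] [DecidableEq V] (S : Finset V) :
    trueSet (boolIndicator S) = S := by
  ext; simp

@[simp]
lemma boolIndicator_trueSet [Fintype V] [DecidableEq V] (x : V → Bool) :
    boolIndicator (trueSet x) = x := by
  funext v; simp [boolIndicator]

lemma boolIndicator_univ [Fintype V] [DecidableEq V] :
    boolIndicator (univ : Finset V) = fun _ => true := by
  funext v; simp [boolIndicator]

lemma boolIndicator_inter [DecidableEq V] (S T : Finset V) :
    boolIndicator (S ∩ T) = fun v => boolIndicator S v && boolIndicator T v := by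
  funext v; simp [boolIndicator]

variable {h : (V → Bool) → Bool} {K K' : Finset V} {x : V → Bool} {𝓑 : Set (Finset V)}

lemma IsKey.mono (hK : IsKey h K) (hKK' : K ⊆ K') : IsKey h K' :=
  fun v hv y hy hyK' => hK v (fun hvK => hv (hKK' hvK)) y hy fun a ha => hyK' a (hKK' ha)

lemma IsKey.forall_eq_true (hK : IsKey h K) (hx : h x = true) (hxK : ∀ a ∈ K, x a = true) :
    ∀ v, x v = true := by
  intro v
  by_cases hv : v ∈ K
  · exact hxK v hv
  · exact hK v hv x hx hxK

lemma IsKey.eq_univ [Fintype V] [DecidableEq V] (hK : IsKey h K)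
    (hχ : h (boolIndicator K) = true) : K = univ :=
  eq_univ_of_forall fun v => by simpa using hK.forall_eq_true hχ (by simp) v

lemma IsKey.exists_mem_minKeys_subset [Fintype V] (hK : IsKey h K) :
    ∃ K' ∈ minKeys h, K' ⊆ K := by
  obtain ⟨K', hK'K, hmin⟩ :=
    (univ.filter (IsKey h)).exists_le_minimal (mem_filter.2 ⟨mem_univ K, hK⟩)
  refine ⟨K', ⟨(mem_filter.1 hmin.1).2, fun K'' hK'' hsub => ?_⟩, hK'K⟩
  exact hsub.antisymm (hmin.2 (mem_filter.2 ⟨mem_univ K'', hK''⟩) hsub)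

lemma minKeys_eq_of_isKey_iff (h𝓑 : SpernerFam 𝓑) (hkey : ∀ K, IsKey h K ↔ ∃ B ∈ 𝓑, B ⊆ K) :
    minKeys h = 𝓑 := by
  ext K
  constructor
  · rintro ⟨hK, hmin⟩
    obtain ⟨B, hB, hBK⟩ := (hkey K).1 hK
    rwa [← hmin B ((hkey B).2 ⟨B, hB, subset_rfl⟩) hBK]
  · intro hK
    refine ⟨(hkey K).2 ⟨K, hK, subset_rfl⟩, fun K' hK' hK'K => ?_⟩
    obtain ⟨B, hB, hBK'⟩ := (hkey K').1 hK'
    exact hK'K.antisymm (h𝓑 B hB K hK (hBK'.trans hK'K) ▸ hBK')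

lemma isKey_phiB [Fintype V] [DecidableEq V] {B : Finset V} (hB : B ∈ 𝓑) :
    IsKey (PhiB 𝓑) B :=
  fun v _ _ hy hyB => of_decide_eq_true hy B hB hyB v

lemma phiB_eq_true_of_minKeys_eq [Fintype V] [DecidableEq V] (hmin : minKeys h = 𝓑)
    (hx : h x = true) : PhiB 𝓑 x = true :=
  decide_eq_true fun B hB hxB => (hmin ▸ hB : B ∈ minKeys h).1.forall_eq_true hx hxB

lemma PureHorn.apply_boolIndicator_inf [Fintype V] [DecidableEq V] (hh : PureHorn h)
    (F : Finset (Finset V)) (hF : ∀ I ∈ F, h (boolIndicator I) = true) :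
    h (boolIndicator (F.inf id)) = true := by
  refine F.inf_induction (p := fun I => h (boolIndicator I) = true) ?_ ?_ hF
  · rw [top_eq_univ, boolIndicator_univ]
    exact hh.1
  · intro I hI J hJ
    rw [inf_eq_inter, boolIndicator_inter]
    exact hh.2 _ _ hI hJ

end BooleanFunctions

section Graphs

variable {V : Type*} {G : SimpleGraph V} {S T : Finset V}

lemma edgeFam_spernerFam [DecidableEq V] (G : SimpleGraph V) : SpernerFam (edgeFam G) := by
  rintro _ ⟨a, b, hab, rfl⟩ _ ⟨c, d, hcd, rfl⟩ hsub
  exact eq_of_subset_of_card_le hsub (by rw [card_pair hab.ne, card_pair hcd.ne])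

lemma minKeys_eq_edgeFam [DecidableEq V] {h : (V → Bool) → Bool}
    (hedge : ∀ e ∈ edgeFam G, IsKey h e)
    (hindep : ∀ K : Finset V, (∀ u ∈ K, ∀ v ∈ K, ¬ G.Adj u v) → ¬ IsKey h K) :
    minKeys h = edgeFam G := by
  refine minKeys_eq_of_isKey_iff (edgeFam_spernerFam G) fun K => ⟨fun hK => ?_, ?_⟩
  · by_contra hno
    refine hindep K (fun u hu v hv huv => hno ?_) hK
    exact ⟨{u, v}, ⟨u, v, huv, rfl⟩, insert_subset hu (singleton_subset_iff.2 hv)⟩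
  · rintro ⟨e, he, heK⟩
    exact (hedge e he).mono heK

lemma not_indep_univ [Fintype V] [DecidableEq V] (hE : (edgeFam G).Nonempty) :
    ¬ ∀ u ∈ (univ : Finset V), ∀ v ∈ univ, ¬ G.Adj u v := by
  obtain ⟨_, a, b, hab, rfl⟩ := hE
  exact fun hind => hind a (mem_univ a) b (mem_univ b) hab

lemma indep_insert [DecidableEq V] {a : V} (hS : ∀ u ∈ S, ∀ v ∈ S, ¬ G.Adj u v)
    (ha : ∀ b ∈ S, ¬ G.Adj a b) : ∀ u ∈ insert a S, ∀ v ∈ insert a S, ¬ G.Adj u v := by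
  intro u hu v hv huv
  rcases mem_insert.1 hu with rfl | huS <;> rcases mem_insert.1 hv with rfl | hvS
  · exact G.irrefl huv
  · exact ha v hvS huv
  · exact ha u huS huv.symm
  · exact hS u huS v hvS huv

lemma phiB_edgeFam_eq_true_iff [Fintype V] [DecidableEq V] {x : V → Bool} :
    PhiB (edgeFam G) x = true ↔
      (∀ u ∈ trueSet x, ∀ v ∈ trueSet x, ¬ G.Adj u v) ∨ ∀ v, x v = true := by
  refine ⟨fun hx => or_iff_not_imp_right.2 fun hall u hu v hv huv => hall ?_, ?_⟩
  · exact of_decide_eq_true hx {u, v} ⟨u, v, huv, rfl⟩ (by simp_all)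
  · rintro (hind | hall)
    · refine decide_eq_true fun _ ⟨a, b, hab, he⟩ hxe => absurd hab (hind a ?_ b ?_) <;>
        simp_all
    · exact decide_eq_true fun _ _ _ => hall

lemma minKeys_phiB_edgeFam [Fintype V] [DecidableEq V] (hE : (edgeFam G).Nonempty) :
    minKeys (PhiB (edgeFam G)) = edgeFam G := by
  refine minKeys_eq_edgeFam (fun e he => isKey_phiB he) fun K hK hkey => not_indep_univ hE ?_
  have hχ : PhiB (edgeFam G) (boolIndicator K) = true :=
    phiB_edgeFam_eq_true_iff.2 (Or.inl (by simpa using hK))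
  rwa [← hkey.eq_univ hχ]

lemma exists_maximalIndepSet_superset [Fintype V] (hS : ∀ u ∈ S, ∀ v ∈ S, ¬ G.Adj u v) :
    ∃ I, MaximalIndepSet G I ∧ S ⊆ I := by
  obtain ⟨I, hSI, hmax⟩ := (univ.filter fun I : Finset V => ∀ u ∈ I, ∀ v ∈ I, ¬ G.Adj u v)
    |>.exists_le_maximal (mem_filter.2 ⟨mem_univ S, hS⟩)
  refine ⟨I, ⟨(mem_filter.1 hmax.1).2, fun I' hI' hII' => ?_⟩, hSI⟩
  exact (hmax.2 (mem_filter.2 ⟨mem_univ I', hI'⟩) hII').antisymm hII'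

lemma MaximalIndepSet.mem_of_indep_insert [DecidableEq V] {I : Finset V} {v : V}
    (hI : MaximalIndepSet G I) (hv : ∀ a ∈ insert v I, ∀ b ∈ insert v I, ¬ G.Adj a b) :
    v ∈ I :=
  hI.2 _ hv (subset_insert v I) ▸ mem_insert_self v I

noncomputable def indepClosure [Fintype V] [DecidableEq V] (G : SimpleGraph V)
    (S : Finset V) : Finset V :=
  (univ.filter fun J => MaximalIndepSet G J ∧ S ⊆ J).inf id

section Closure

variable [Fintype V] [DecidableEq V]

lemma mem_indepClosure {w : V} :
    w ∈ indepClosure G S ↔ ∀ J, MaximalIndepSet G J → S ⊆ J → w ∈ J := by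
  simp [indepClosure, Finset.mem_inf]

lemma subset_indepClosure : S ⊆ indepClosure G S :=
  fun _ hw => mem_indepClosure.2 fun _ _ hSJ => hSJ hw

lemma indepClosure_mono (hST : S ⊆ T) : indepClosure G S ⊆ indepClosure G T :=
  fun _ hw => mem_indepClosure.2 fun J hJ hTJ => mem_indepClosure.1 hw J hJ (hST.trans hTJ)

lemma indepClosure_eq_univ (hS : ¬ ∀ u ∈ S, ∀ v ∈ S, ¬ G.Adj u v) : indepClosure G S = univ :=
  eq_univ_of_forall fun _ => mem_indepClosure.2 fun _ hJ hSJ =>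
    absurd (fun u hu v hv => hJ.1 u (hSJ hu) v (hSJ hv)) hS

lemma MaximalIndepSet.indepClosure_subset {I : Finset V} (hI : MaximalIndepSet G I) :
    indepClosure G I ⊆ I :=
  fun _ hw => mem_indepClosure.1 hw I hI subset_rfl

end Closure

def HasIndividualNeighbors (G : SimpleGraph V) : Prop :=
  ∀ I : Finset V, MaximalIndepSet G I → ∀ v ∈ I,
    ∃ u ∉ I, G.Adj u v ∧ ∀ w ∈ I, G.Adj u w → w = v

variable [Fintype V] [DecidableEq V]

lemma HasIndividualNeighbors.indepClosure_subset (hG : HasIndividualNeighbors G)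
    (hS : ∀ u ∈ S, ∀ v ∈ S, ¬ G.Adj u v) : indepClosure G S ⊆ S := by
  intro w hw
  by_contra hwS
  obtain ⟨I, hI, hSI⟩ := exists_maximalIndepSet_superset hS
  obtain ⟨u, -, huw, hu⟩ := hG I hI w (mem_indepClosure.1 hw I hI hSI)
  have hswap : ∀ a ∈ insert u (I.erase w), ∀ b ∈ insert u (I.erase w), ¬ G.Adj a b :=
    indep_insert (fun a ha b hb => hI.1 a (mem_of_mem_erase ha) b (mem_of_mem_erase hb))
      fun b hb hub => ne_of_mem_erase hb (hu b (mem_of_mem_erase hb) hub)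
  obtain ⟨J, hJ, hJsup⟩ := exists_maximalIndepSet_superset hswap
  have hSJ : S ⊆ J := fun z hz =>
    hJsup (mem_insert_of_mem (mem_erase.2 ⟨ne_of_mem_of_not_mem hz hwS, hSI hz⟩))
  exact hJ.1 u (hJsup (mem_insert_self _ _)) w (mem_indepClosure.1 hw J hJ hSJ) huw

lemma hasIndividualNeighbors_of_indepClosure_subset
    (hG : ∀ S : Finset V, (∀ u ∈ S, ∀ v ∈ S, ¬ G.Adj u v) → indepClosure G S ⊆ S) :
    HasIndividualNeighbors G := by
  intro I hI v hv
  by_contra! hno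
  have hvJ : ∀ J, MaximalIndepSet G J → I.erase v ⊆ J → v ∈ J := by
    refine fun J hJ hIJ => hJ.mem_of_indep_insert (indep_insert hJ.1 fun b hbJ hvb => ?_)
    obtain ⟨w, hwI, hbw, hwv⟩ := hno b (fun hbI => hI.1 v hv b hbI hvb) hvb.symm
    exact hJ.1 b hbJ w (hIJ (mem_erase.2 ⟨hwv, hwI⟩)) hbw
  have hS : ∀ a ∈ I.erase v, ∀ b ∈ I.erase v, ¬ G.Adj a b :=
    fun a ha b hb => hI.1 a (mem_of_mem_erase ha) b (mem_of_mem_erase hb)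
  exact notMem_erase v I (hG _ hS (mem_indepClosure.2 hvJ))

lemma hasIndividualNeighbors_iff : HasIndividualNeighbors G ↔
    ∀ S : Finset V, (∀ u ∈ S, ∀ v ∈ S, ¬ G.Adj u v) → indepClosure G S ⊆ S :=
  ⟨fun hG _ => hG.indepClosure_subset, hasIndividualNeighbors_of_indepClosure_subset⟩

end Graphs

section IndepClosureHorn

variable {V : Type*} [Fintype V] [DecidableEq V] {G : SimpleGraph V} {h : (V → Bool) → Bool}
  {x : V → Bool}

noncomputable def indepClosureHorn (G : SimpleGraph V) : (V → Bool) → Bool :=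
  fun x => decide (indepClosure G (trueSet x) ⊆ trueSet x)

lemma indepClosureHorn_eq_true_iff :
    indepClosureHorn G x = true ↔ indepClosure G (trueSet x) ⊆ trueSet x :=
  decide_eq_true_iff

lemma pureHorn_indepClosureHorn : PureHorn (indepClosureHorn G) := by
  refine ⟨indepClosureHorn_eq_true_iff.2 fun v _ => by simp, fun x y hx hy => ?_⟩
  rw [indepClosureHorn_eq_true_iff] at hx hy ⊢
  have htrue : trueSet (fun v => x v && y v) = trueSet x ∩ trueSet y := by ext; simp
  rw [htrue]
  exact subset_inter ((indepClosure_mono inter_subset_left).trans hx)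
    ((indepClosure_mono inter_subset_right).trans hy)

lemma minKeys_indepClosureHorn (hE : (edgeFam G).Nonempty) :
    minKeys (indepClosureHorn G) = edgeFam G := by
  refine minKeys_eq_edgeFam ?_ fun K hK hkey => ?_
  · rintro _ ⟨a, b, hab, rfl⟩ v - y hy hyab
    rw [indepClosureHorn_eq_true_iff, indepClosure_eq_univ, univ_subset_iff] at hy
    · simpa using hy.ge (mem_univ v)
    · exact fun hind => hind a (by simp_all) b (by simp_all) hab
  · obtain ⟨I, hI, hKI⟩ := exists_maximalIndepSet_superset hK
    have hχ : indepClosureHorn G (boolIndicator I) = true := by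
      simpa [indepClosureHorn_eq_true_iff] using hI.indepClosure_subset
    refine not_indep_univ hE ?_
    rw [← (hkey.mono hKI).eq_univ hχ]
    exact hI.1

lemma MaximalIndepSet.apply_boolIndicator_eq_true (hmin : minKeys h = edgeFam G)
    {I : Finset V} (hI : MaximalIndepSet G I) : h (boolIndicator I) = true := by
  by_contra hfalse
  have hkey : IsKey h I := by
    intro w _ y hy hyI
    by_cases hind : ∀ u ∈ trueSet y, ∀ v ∈ trueSet y, ¬ G.Adj u v
    · have hyI : trueSet y = I := hI.2 _ hind fun a ha => mem_trueSet.2 (hyI a ha)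
      rw [← boolIndicator_trueSet y, hyI] at hy
      exact absurd hy hfalse
    · push Not at hind
      obtain ⟨a, ha, b, hb, hab⟩ := hind
      have hedge : {a, b} ∈ minKeys h := hmin ▸ ⟨a, b, hab, rfl⟩
      exact hedge.1.forall_eq_true hy (by simp_all) w
  obtain ⟨K, hK, hKI⟩ := hkey.exists_mem_minKeys_subset
  rw [hmin] at hK
  obtain ⟨a, b, hab, rfl⟩ := hK
  exact hI.1 a (hKI (by simp)) b (hKI (by simp)) hab

lemma PureHorn.apply_eq_true_of_indepClosureHorn (hh : PureHorn h)
    (hmin : minKeys h = edgeFam G) (hx : indepClosureHorn G x = true) : h x = true := by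
  rw [indepClosureHorn_eq_true_iff] at hx
  rw [← boolIndicator_trueSet x]
  by_cases hind : ∀ u ∈ trueSet x, ∀ v ∈ trueSet x, ¬ G.Adj u v
  · rw [← hx.antisymm subset_indepClosure]
    exact hh.apply_boolIndicator_inf _ fun I hI =>
      (mem_filter.1 hI).2.1.apply_boolIndicator_eq_true hmin
  · rw [indepClosure_eq_univ hind, univ_subset_iff] at hx
    rw [hx, boolIndicator_univ]
    exact hh.1

lemma uniqueKeyHypergraph_edgeFam_iff (hE : (edgeFam G).Nonempty) :
    UniqueKeyHypergraph (edgeFam G) ↔ indepClosureHorn G = PhiB (edgeFam G) := by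
  refine ⟨fun hG => hG.2 _ pureHorn_indepClosureHorn (minKeys_indepClosureHorn hE),
    fun heq => ⟨minKeys_phiB_edgeFam hE, fun h hh hmin => funext fun x => ?_⟩⟩
  refine Bool.eq_iff_iff.2 ⟨phiB_eq_true_of_minKeys_eq hmin, fun hx => ?_⟩
  exact hh.apply_eq_true_of_indepClosureHorn hmin (heq ▸ hx)

lemma indepClosureHorn_eq_phiB_iff (hE : (edgeFam G).Nonempty) :
    indepClosureHorn G = PhiB (edgeFam G) ↔
      ∀ S : Finset V, (∀ u ∈ S, ∀ v ∈ S, ¬ G.Adj u v) → indepClosure G S ⊆ S := by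
  refine ⟨fun heq S hS => ?_, fun hG => funext fun x => Bool.eq_iff_iff.2 ⟨?_, ?_⟩⟩
  · have hχ : PhiB (edgeFam G) (boolIndicator S) = true :=
      phiB_edgeFam_eq_true_iff.2 (Or.inl (by simpa using hS))
    simpa [← heq, indepClosureHorn_eq_true_iff] using hχ
  · exact phiB_eq_true_of_minKeys_eq (minKeys_indepClosureHorn hE)
  · rw [phiB_edgeFam_eq_true_iff, indepClosureHorn_eq_true_iff]
    rintro (hind | hall)
    · exact hG _ hind
    · exact fun v _ => mem_trueSet.2 (hall v)

end IndepClosureHorn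

/-- A graph with at least one edge is a unique key graph iff for every maximal independent
set `I` and every `v ∈ I` there is a vertex `u ∉ I` that is an individual neighbor of `v`,
i.e. `N(u) ∩ I = {v}`. -/
theorem stmt7 (G : SimpleGraph V) (hE : (edgeFam G).Nonempty) :
    UniqueKeyHypergraph (edgeFam G) ↔
      ∀ I : Finset V, MaximalIndepSet G I → ∀ v ∈ I,
        ∃ u ∉ I, G.Adj u v ∧ ∀ w ∈ I, G.Adj u w → w = v := by
  rw [uniqueKeyHypergraph_edgeFam_iff hE, indepClosureHorn_eq_phiB_iff hE]
  exact hasIndividualNeighbors_iff.symm
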